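/- arXiv:1007.0569 — 6 statements merged into one kernel-verified Lean document; each statement's English description precedes it below -/
import Mathlib

section
/- For every ℓ > 1, the sum over all multi-indices α of (2ℕ)^{−ℓα} := ∏_{k≥1} (2k)^{−ℓ α_k} is finite. -/
/-! With `x k = (2(k+1))^(-ℓ)` the terms are the monomials `x^α`. Every finite set of
multi-indices lies below some `β`, and the sum of `x^α` over `α ≤ β` factors as
`∏ k, ∑_{m ≤ β k} x k ^ m ≤ ∏ k, (1 - x k)⁻¹ ≤ exp (∑ k, x k / (1 - x k))`,
which is bounded uniformly in `β` because `∑ k, x k < ∞` for `ℓ > 1`. -/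

open scoped BigOperators

noncomputable section

abbrev MultiIndex := ℕ →₀ ℕ

/-- `r^α = ∏ₖ r_k^{α_k}` -/
def mpow (r : ℕ → ℝ) (α : MultiIndex) : ℝ := ∏ k ∈ α.support, r k ^ α k

/-- `α! = ∏ₖ α_k!` -/
def mfact (α : MultiIndex) : ℕ := ∏ k ∈ α.support, (α k).factorial

/-- generalized binomial coefficient `C(α,β) = ∏ₖ C(α_k, β_k)` -/
def mchoose (α β : MultiIndex) : ℕ :=
  ∏ k ∈ α.support ∪ β.support, Nat.choose (α k) (β k)

/-- `|α| = ∑ₖ α_k` -/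
def mdeg (α : MultiIndex) : ℕ := ∑ k ∈ α.support, α k

open Finset Real

theorem Finset.sum_finsupp_prod {ι α β : Type*} [Zero α] [CommSemiring β] (s : Finset ι)
    (t : ι → Finset α) (f : ι → α → β) :
    ∑ g ∈ s.finsupp t, ∏ i ∈ s, f i (g i) = ∏ i ∈ s, ∑ a ∈ t i, f i a := by
  classical
  rw [Finset.finsupp, sum_map, prod_sum]
  refine sum_congr rfl fun p _ => ?_
  rw [← prod_attach s]
  exact prod_congr rfl fun i _ => by simp [Finsupp.indicator_of_mem i.2]

theorem Finsupp.Iic_eq_finsupp {ι : Type*} [DecidableEq ι] (β : ι →₀ ℕ) :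
    Iic β = β.support.finsupp (fun i => Iic (β i)) := by
  ext α
  rw [mem_Iic, mem_finsupp_iff]
  refine ⟨fun h => ⟨Finsupp.support_mono h, fun i _ => mem_Iic.2 (h i)⟩, fun ⟨hs, h⟩ i => ?_⟩
  by_cases hi : i ∈ β.support
  · exact mem_Iic.1 (h i hi)
  · rw [Finsupp.notMem_support_iff.1 (fun h' => hi (hs h'))]
    exact Nat.zero_le _

theorem Real.inv_one_sub_le_exp {y : ℝ} (hy : y < 1) : (1 - y)⁻¹ ≤ exp (y / (1 - y)) := by
  have h : (1 - y)⁻¹ = y / (1 - y) + 1 := by field_simp [(sub_pos.2 hy).ne']; ring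
  exact h ▸ add_one_le_exp _

theorem Summable.div_one_sub {ι : Type*} {x : ι → ℝ} (hx : Summable x) :
    Summable fun i => x i / (1 - x i) := by
  refine .of_norm_bounded_eventually (hx.abs.mul_left 2) ?_
  filter_upwards [hx.abs.tendsto_cofinite_zero.eventually (ge_mem_nhds one_half_pos)] with i hi
  have h1 : 1 / 2 ≤ 1 - x i := by linarith [le_abs_self (x i)]
  rw [norm_div, Real.norm_eq_abs, Real.norm_eq_abs, abs_of_pos (by linarith : 0 < 1 - x i),
    div_le_iff₀ (by linarith)]
  nlinarith [abs_nonneg (x i)]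

section FinsuppProdPow

variable {ι : Type*} {x : ι → ℝ}

theorem sum_Iic_finsupp_prod_pow_le [DecidableEq ι] (hx0 : ∀ i, 0 ≤ x i) (hx1 : ∀ i, x i < 1)
    (β : ι →₀ ℕ) :
    ∑ α ∈ Iic β, α.prod (fun i m => x i ^ m) ≤ ∏ i ∈ β.support, (1 - x i)⁻¹ :=
  calc ∑ α ∈ Iic β, α.prod (fun i m => x i ^ m)
      = ∑ α ∈ Iic β, ∏ i ∈ β.support, x i ^ α i :=
        sum_congr rfl fun α hα =>
          Finsupp.prod_of_support_subset _ (Finsupp.support_mono (mem_Iic.1 hα)) _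
            fun i _ => pow_zero _
    _ = ∏ i ∈ β.support, ∑ m ∈ Iic (β i), x i ^ m := by
        rw [Finsupp.Iic_eq_finsupp, sum_finsupp_prod]
    _ ≤ ∏ i ∈ β.support, (1 - x i)⁻¹ := by
        refine prod_le_prod (fun i _ => sum_nonneg fun m _ => pow_nonneg (hx0 i) m) fun i _ => ?_
        rw [← tsum_geometric_of_lt_one (hx0 i) (hx1 i)]
        exact Summable.sum_le_tsum _ (fun m _ => pow_nonneg (hx0 i) m)
          (summable_geometric_of_lt_one (hx0 i) (hx1 i))

theorem summable_finsupp_prod_pow (hx : Summable x) (hx0 : ∀ i, 0 ≤ x i) (hx1 : ∀ i, x i < 1) :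
    Summable fun α : ι →₀ ℕ => α.prod fun i m => x i ^ m := by
  classical
  have hterm0 : ∀ α : ι →₀ ℕ, 0 ≤ α.prod fun i m => x i ^ m :=
    fun α => prod_nonneg fun i _ => pow_nonneg (hx0 i) _
  refine summable_of_sum_le hterm0 (c := exp (∑' i, x i / (1 - x i))) fun u => ?_
  set β := u.sup id
  calc ∑ α ∈ u, α.prod (fun i m => x i ^ m)
      ≤ ∑ α ∈ Iic β, α.prod (fun i m => x i ^ m) :=
        sum_le_sum_of_subset_of_nonneg (fun α hα => mem_Iic.2 (le_sup (f := id) hα))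
          fun α _ _ => hterm0 α
    _ ≤ ∏ i ∈ β.support, (1 - x i)⁻¹ := sum_Iic_finsupp_prod_pow_le hx0 hx1 β
    _ ≤ ∏ i ∈ β.support, exp (x i / (1 - x i)) :=
        prod_le_prod (fun i _ => inv_nonneg.2 (sub_pos.2 (hx1 i)).le)
          fun i _ => inv_one_sub_le_exp (hx1 i)
    _ = exp (∑ i ∈ β.support, x i / (1 - x i)) := (exp_sum _ _).symm
    _ ≤ exp (∑' i, x i / (1 - x i)) :=
        exp_le_exp.2 <| Summable.sum_le_tsum _
          (fun i _ => div_nonneg (hx0 i) (sub_pos.2 (hx1 i)).le) hx.div_one_sub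

end FinsuppProdPow

-- The `k`-th variable, `k = 0, 1, …`, carries the factor `(2(k+1))^(-ℓ α_k)`.
/-- summability of (2N)^(-l*alpha) over multi-indices, l > 1;
the k-th variable (k = 0,1,...) corresponds to the factor (2(k+1))^(-l*alpha_k). -/
theorem stmt2 (ℓ : ℝ) (hℓ : 1 < ℓ) :
    Summable (fun α : MultiIndex =>
      ∏ k ∈ α.support, ((2 * ((k : ℝ) + 1)) ^ (-(ℓ * (α k : ℝ))) : ℝ)) := by
  set x : ℕ → ℝ := fun k => (2 * ((k : ℝ) + 1)) ^ (-ℓ)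
  have hbase : ∀ k : ℕ, 1 < 2 * ((k : ℝ) + 1) := fun k => by linarith [k.cast_nonneg (α := ℝ)]
  have hx : Summable x := by
    have h : Summable fun k : ℕ => ((k + 1 : ℕ) : ℝ) ^ (-ℓ) :=
      (summable_nat_add_iff 1).2 (summable_nat_rpow.2 (by linarith))
    refine (h.mul_left (2 ^ (-ℓ))).congr fun k => ?_
    push_cast
    exact (mul_rpow zero_le_two (by positivity)).symm
  have hterm : ∀ (k m : ℕ), (2 * ((k : ℝ) + 1)) ^ (-(ℓ * (m : ℝ))) = x k ^ m := fun k m => by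
    rw [← rpow_natCast, ← rpow_mul (by linarith [hbase k]), neg_mul]
  simp_rw [hterm]
  exact summable_finsupp_prod_pow hx (fun k => rpow_nonneg (by linarith [hbase k]) _)
    fun k => rpow_lt_one_of_one_lt_of_neg (hbase k) (by linarith)
end
end

section
/- Let u, v : ℕ → ℝ be sequences and let p, q, r > 0 satisfy 1/p + 1/q = 1/r. If ∑_{n≥0} pⁿ u_n² < ∞ and ∑_{n≥0} v_n²/rⁿ < ∞, then for each n the series D_n := ∑_{k=0}^∞ (C(n+k, k))^{1/2} v_{n+k} u_k converges absolutely and ∑_{n≥0} D_n²/qⁿ < ∞. -/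
open scoped BigOperators

noncomputable section

/-!
With `t = r / p`, so that `1 - t = r / q`, write
`√C(n+k,k) v_{n+k} u_k = √(C(n+k,k) tᵏ) · (v_{n+k} u_k / √(tᵏ))`.
Cauchy–Schwarz together with `∑ₖ C(n+k,k) tᵏ = (1 - t)^{-(n+1)}` gives
`D_n² / qⁿ ≤ (q / r) ∑ₖ (pᵏ u_k²) (v_{n+k}² / r^{n+k})`,
and the right-hand side is summable in `n`, being a regrouping of part of the product of the
two given convergent series.
-/

theorem summable_abs_mul_and_sq_tsum_mul_le {ι : Type*} {f g : ι → ℝ}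
    (hf : Summable fun i => f i ^ 2) (hg : Summable fun i => g i ^ 2) :
    Summable (fun i => |f i * g i|) ∧
      (∑' i, f i * g i) ^ 2 ≤ (∑' i, f i ^ 2) * ∑' i, g i ^ 2 := by
  have abs_rpow_two (x : ℝ) : |x| ^ (2 : ℝ) = x ^ 2 := by rw [Real.rpow_two, sq_abs]
  obtain ⟨habs, hle⟩ := Real.summable_and_inner_le_Lp_mul_Lq_tsum_of_nonneg
    Real.HolderConjugate.two_two (fun i => abs_nonneg (f i)) (fun i => abs_nonneg (g i))
    (by simpa only [abs_rpow_two] using hf) (by simpa only [abs_rpow_two] using hg)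
  simp only [abs_rpow_two, ← abs_mul, ← Real.sqrt_eq_rpow] at habs hle
  have habs_tsum : |∑' i, f i * g i| ≤ ∑' i, |f i * g i| := by
    simpa only [Real.norm_eq_abs] using
      norm_tsum_le_tsum_norm (f := fun i => f i * g i) (by simpa only [Real.norm_eq_abs] using habs)
  refine ⟨habs, ?_⟩
  calc (∑' i, f i * g i) ^ 2 = |∑' i, f i * g i| ^ 2 := (sq_abs _).symm
    _ ≤ (√(∑' i, f i ^ 2) * √(∑' i, g i ^ 2)) ^ 2 := by gcongr; exact habs_tsum.trans hle
    _ = (∑' i, f i ^ 2) * ∑' i, g i ^ 2 := by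
        rw [mul_pow, Real.sq_sqrt (tsum_nonneg fun i => sq_nonneg _),
          Real.sq_sqrt (tsum_nonneg fun i => sq_nonneg _)]

theorem summable_abs_and_sq_tsum_sqrt_choose_mul_le {w : ℕ → ℝ} {t : ℝ} (ht₀ : 0 < t)
    (ht₁ : t < 1) (n : ℕ) (hw : Summable fun k => w k ^ 2 / t ^ k) :
    Summable (fun k => |√((n + k).choose k) * w k|) ∧
      (∑' k, √((n + k).choose k) * w k) ^ 2 ≤
        (∑' k, w k ^ 2 / t ^ k) / (1 - t) ^ (n + 1) := by
  have hchoose : HasSum (fun k => ((n + k).choose k : ℝ) * t ^ k) (1 / (1 - t) ^ (n + 1)) := by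
    have hsymm (k : ℕ) : (n + k).choose k = (k + n).choose n := by
      rw [add_comm k, Nat.choose_symm_add]
    simpa only [hsymm] using
      hasSum_choose_mul_geometric_of_norm_lt_one n (by rwa [Real.norm_of_nonneg ht₀.le])
  have hsq_choose (k : ℕ) : √((n + k).choose k : ℝ) ^ 2 = (n + k).choose k :=
    Real.sq_sqrt (Nat.cast_nonneg _)
  have hsq_pow (k : ℕ) : √(t ^ k) ^ 2 = t ^ k := Real.sq_sqrt (pow_nonneg ht₀.le k)
  have hsplit (k : ℕ) :
      √((n + k).choose k) * √(t ^ k) * (w k / √(t ^ k)) = √((n + k).choose k) * w k := by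
    field_simp [(Real.sqrt_pos.2 (pow_pos ht₀ k)).ne']
  obtain ⟨habs, hle⟩ := summable_abs_mul_and_sq_tsum_mul_le
    (f := fun k => √((n + k).choose k) * √(t ^ k)) (g := fun k => w k / √(t ^ k))
    (by simpa only [mul_pow, hsq_choose, hsq_pow] using hchoose.summable)
    (by simpa only [div_pow, hsq_pow] using hw)
  simp only [hsplit, mul_pow, div_pow, hsq_choose, hsq_pow, hchoose.tsum_eq] at habs hle
  exact ⟨habs, hle.trans_eq (by ring)⟩

theorem summable_mul_comp_add_and_tsum_of_nonneg {a b : ℕ → ℝ} (ha₀ : 0 ≤ a)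
    (hb₀ : 0 ≤ b) (ha : Summable a) (hb : Summable b) :
    (∀ n, Summable fun k => a k * b (n + k)) ∧
      Summable fun n => ∑' k, a k * b (n + k) := by
  have hinj : Function.Injective fun x : ℕ × ℕ => (x.2, x.1 + x.2) := by
    rintro ⟨n, k⟩ ⟨n', k'⟩ h
    simp only [Prod.mk.injEq] at h ⊢
    omega
  exact (summable_prod_of_nonneg fun x => mul_nonneg (ha₀ _) (hb₀ _)).1
    ((ha.mul_of_nonneg hb ha₀ hb₀).comp_injective hinj)

/-- one-dimensional Malliavin derivative estimate. -/
theorem stmt6 (u v : ℕ → ℝ) (p q r : ℝ) (hp : 0 < p) (hq : 0 < q) (hr : 0 < r)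
    (hpqr : 1 / p + 1 / q = 1 / r)
    (hu : Summable fun n => p ^ n * (u n) ^ 2)
    (hv : Summable fun n => (v n) ^ 2 / r ^ n) :
    (∀ n, Summable fun k => |Real.sqrt (Nat.choose (n + k) k) * v (n + k) * u k|) ∧
    Summable (fun n =>
      (∑' k, Real.sqrt (Nat.choose (n + k) k) * v (n + k) * u k) ^ 2 / q ^ n) := by
  have hone_sub : 1 - r / p = r / q := by
    field_simp at hpqr ⊢
    linarith
  have ht₀ : 0 < r / p := div_pos hr hp
  have ht₁ : r / p < 1 := by linarith [div_pos hr hq]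
  have hweight (n k : ℕ) : (v (n + k) * u k) ^ 2 / (r / p) ^ k =
      r ^ n * (p ^ k * u k ^ 2 * (v (n + k) ^ 2 / r ^ (n + k))) := by
    rw [div_pow, pow_add]
    field_simp
  obtain ⟨hslice, hF⟩ := summable_mul_comp_add_and_tsum_of_nonneg
    (fun k => by positivity) (fun k => by positivity) hu hv
  have hD (n : ℕ) := summable_abs_and_sq_tsum_sqrt_choose_mul_le ht₀ ht₁ n
    (w := fun k => v (n + k) * u k) (by simpa only [hweight] using (hslice n).mul_left (r ^ n))
  simp only [← mul_assoc] at hD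
  simp only [hweight, tsum_mul_left, hone_sub] at hD
  refine ⟨fun n => (hD n).1, (hF.mul_left (q / r)).of_nonneg_of_le (fun n => by positivity)
    fun n => ?_⟩
  rw [div_le_iff₀ (by positivity)]
  refine (hD n).2.trans_eq ?_
  generalize ∑' k, p ^ k * u k ^ 2 * (v (n + k) ^ 2 / r ^ (n + k)) = F
  rw [div_pow]
  field_simp
  ring
end
end

section
/- Let u, f : ℕ → ℝ be sequences and let p, q, r > 0 satisfy 1/p + 1/q = 1/r. If ∑_{n≥0} pⁿ u_n² < ∞ and ∑_{n≥0} qⁿ f_n² < ∞, then the sequence δ_n := ∑_{k=0}^n (C(n, k))^{1/2} f_k u_{n−k} satisfies ∑_{n≥0} rⁿ δ_n² ≤ (∑_{n≥0} pⁿ u_n²)(∑_{n≥0} qⁿ f_n²). -/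
open scoped BigOperators

noncomputable section

/-!
Cauchy–Schwarz against the binomial weights `C(n,k) q⁻ᵏ p⁻⁽ⁿ⁻ᵏ⁾`, whose total mass is
`(q⁻¹ + p⁻¹)ⁿ = r⁻ⁿ`, gives `rⁿ δₙ² ≤ ∑ₖ (qᵏ f_k²)(pⁿ⁻ᵏ u_{n-k}²)`. The right-hand side is the
Cauchy product of the two weighted sequences, whose sum is the product of their sums.
-/

open Finset

theorem sq_sum_sqrt_choose_mul_le {p q : ℝ} (hp : 0 < p) (hq : 0 < q) (x y : ℕ → ℝ) (n : ℕ) :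
    (∑ k ∈ range (n + 1), √(n.choose k) * x k * y (n - k)) ^ 2 ≤
      (q⁻¹ + p⁻¹) ^ n * ∑ k ∈ range (n + 1), q ^ k * x k ^ 2 * (p ^ (n - k) * y (n - k) ^ 2) := by
  have hmass : ∑ k ∈ range (n + 1), (n.choose k : ℝ) * q⁻¹ ^ k * p⁻¹ ^ (n - k) =
      (q⁻¹ + p⁻¹) ^ n := by
    rw [add_pow]
    exact sum_congr rfl fun k _ => by ring
  rw [← hmass]
  refine sum_sq_le_sum_mul_sum_of_sq_le_mul _ (fun k _ => by positivity)
    (fun k _ => by positivity) fun k _ => le_of_eq ?_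
  rw [mul_pow, mul_pow, Real.sq_sqrt (Nat.cast_nonneg _), inv_pow, inv_pow]
  field_simp

theorem summable_and_tsum_le_of_le_sum_range_mul {a b c : ℕ → ℝ} (ha : Summable a)
    (hb : Summable b) (hc : ∀ n, 0 ≤ c n)
    (hle : ∀ n, c n ≤ ∑ k ∈ range (n + 1), a k * b (n - k)) :
    Summable c ∧ ∑' n, c n ≤ (∑' n, a n) * ∑' n, b n := by
  have hprod := hasSum_sum_range_mul_of_summable_norm (f := a) (g := b) ha.abs hb.abs
  have hsum : Summable c := hprod.summable.of_nonneg_of_le hc hle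
  exact ⟨hsum, hasSum_le hle hsum.hasSum hprod⟩

/-- one-dimensional Skorokhod integral estimate. -/
theorem stmt7 (u f : ℕ → ℝ) (p q r : ℝ) (hp : 0 < p) (hq : 0 < q) (hr : 0 < r)
    (hpqr : 1 / p + 1 / q = 1 / r)
    (hu : Summable fun n => p ^ n * (u n) ^ 2)
    (hf : Summable fun n => q ^ n * (f n) ^ 2) :
    Summable (fun n => r ^ n *
      (∑ k ∈ Finset.range (n + 1), Real.sqrt (Nat.choose n k) * f k * u (n - k)) ^ 2) ∧
    ∑' n, r ^ n *
        (∑ k ∈ Finset.range (n + 1), Real.sqrt (Nat.choose n k) * f k * u (n - k)) ^ 2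
      ≤ (∑' n, p ^ n * (u n) ^ 2) * (∑' n, q ^ n * (f n) ^ 2) := by
  have hmass : r * (q⁻¹ + p⁻¹) = 1 := by
    field_simp at hpqr ⊢
    linarith
  rw [mul_comm (∑' n, p ^ n * u n ^ 2)]
  refine summable_and_tsum_le_of_le_sum_range_mul hf hu (fun n => by positivity) fun n => ?_
  calc r ^ n * (∑ k ∈ range (n + 1), √(n.choose k) * f k * u (n - k)) ^ 2
      ≤ r ^ n * ((q⁻¹ + p⁻¹) ^ n *
          ∑ k ∈ range (n + 1), q ^ k * f k ^ 2 * (p ^ (n - k) * u (n - k) ^ 2)) := by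
        gcongr
        exact sq_sum_sqrt_choose_mul_le hp hq f u n
    _ = ∑ k ∈ range (n + 1), q ^ k * f k ^ 2 * (p ^ (n - k) * u (n - k) ^ 2) := by
        rw [← mul_assoc, ← mul_pow, hmass, one_pow, one_mul]
end
end

section
/- Let u, v : ℕ → ℝ be sequences and let p, q, r > 0 satisfy (1/r − 1/p)(q − 1/p) = 1 and pq > 1. If ∑_{n≥0} pⁿ u_n² < ∞ and ∑_{n≥0} qⁿ v_n² < ∞, then for each n the double series L_n := ∑_{k=0}^n ∑_{m=0}^∞ (C(n,k) C(k+m,m))^{1/2} v_{k+m} u_{n−k} u_m converges absolutely and ∑_{n≥0} rⁿ L_n² < ∞. -/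
/-!
Weighted Cauchy–Schwarz with the weights `w_n(k,m) = C(n,k) C(k+m,m) x^k y^m`, where
`x = p/q` and `y = 1/(pq) < 1`. Summing over `m` (negative binomial series) and then over `k`
(binomial theorem) gives `∑ w_n = (1-y)⁻¹ (1 + x/(1-y))^n`, and the relation between `p, q, r`
says precisely that `1 + x/(1-y) = p/r`. Hence
`r^n L_n² ≤ (1-y)⁻¹ ∑_{k,m} p^n (term)² / w_n`, and
`p^n (term)² / w_n = a_{n-k} a_m b_{k+m}` with `a_j = p^j u_j²`, `b_j = q^j v_j²`;
summed over `n`, `k ≤ n` and `m` this is at most `(∑ a)² ∑ b`.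
-/

open scoped BigOperators

noncomputable section

open Finset

section CauchySchwarz

variable {ι : Type*} {a w g : ι → ℝ}

lemma summable_abs_of_sq_le_mul (hw0 : 0 ≤ w) (hg0 : 0 ≤ g) (hw : Summable w)
    (hg : Summable g) (h : ∀ i, a i ^ 2 ≤ w i * g i) : Summable fun i => |a i| := by
  refine Summable.of_nonneg_of_le (fun i => abs_nonneg _) (fun i => ?_) ((hw.add hg).div_const 2)
  have hwi : 0 ≤ w i := hw0 i
  have hgi : 0 ≤ g i := hg0 i
  refine abs_le_of_sq_le_sq ?_ (by positivity)
  nlinarith [h i, sq_nonneg (w i - g i)]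

lemma sq_tsum_le_tsum_mul_tsum_of_sq_le_mul (hw0 : 0 ≤ w) (hg0 : 0 ≤ g) (hw : Summable w)
    (hg : Summable g) (h : ∀ i, a i ^ 2 ≤ w i * g i) :
    (∑' i, a i) ^ 2 ≤ (∑' i, w i) * ∑' i, g i := by
  have ha : Summable a := (summable_abs_of_sq_le_mul hw0 hg0 hw hg h).of_abs
  refine le_of_tendsto' (ha.hasSum.pow 2) fun s => ?_
  calc (∑ i ∈ s, a i) ^ 2 ≤ (∑ i ∈ s, w i) * ∑ i ∈ s, g i :=
        sum_sq_le_sum_mul_sum_of_sq_le_mul s (fun i _ => hw0 i) (fun i _ => hg0 i) fun i _ => h i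
    _ ≤ (∑' i, w i) * ∑' i, g i :=
        mul_le_mul (hw.sum_le_tsum s fun i _ => hw0 i) (hg.sum_le_tsum s fun i _ => hg0 i)
          (sum_nonneg fun i _ => hg0 i) (tsum_nonneg hw0)

end CauchySchwarz

def binomialWeight (x y : ℝ) (n : ℕ) (km : ℕ × ℕ) : ℝ :=
  n.choose km.1 * (km.1 + km.2).choose km.2 * x ^ km.1 * y ^ km.2

lemma binomialWeight_nonneg {x y : ℝ} (hx : 0 ≤ x) (hy : 0 ≤ y) (n : ℕ) :
    0 ≤ binomialWeight x y n := fun km => by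
  unfold binomialWeight
  positivity

lemma hasSum_binomialWeight {x y : ℝ} (hx : 0 ≤ x) (hy0 : 0 ≤ y) (hy1 : y < 1) (n : ℕ) :
    HasSum (binomialWeight x y n) ((1 - y)⁻¹ * (1 + x / (1 - y)) ^ n) := by
  have hinner (k : ℕ) : HasSum (fun m => binomialWeight x y n (k, m))
      (n.choose k * x ^ k / (1 - y) ^ (k + 1)) := by
    have hy : ‖y‖ < 1 := by rwa [Real.norm_of_nonneg hy0]
    have h := (hasSum_choose_mul_geometric_of_norm_lt_one k hy).mul_left (n.choose k * x ^ k)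
    rw [mul_one_div] at h
    refine (funext fun m => ?_ : (fun m => binomialWeight x y n (k, m)) = _) ▸ h
    simp only [binomialWeight]
    rw [add_comm k m, Nat.choose_symm_add]
    ring
  have houter : HasSum (fun k => n.choose k * x ^ k / (1 - y) ^ (k + 1))
      ((1 - y)⁻¹ * (1 + x / (1 - y)) ^ n) := by
    have h1y : 1 - y ≠ 0 := by linarith
    have hsum : ∑ k ∈ range (n + 1), n.choose k * x ^ k / (1 - y) ^ (k + 1)
        = (1 - y)⁻¹ * (1 + x / (1 - y)) ^ n := by
      rw [add_comm 1, add_pow, mul_sum]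
      refine sum_congr rfl fun k _ => ?_
      rw [one_pow, mul_one, div_pow, pow_succ]
      field_simp
    refine hsum ▸ hasSum_sum_of_ne_finset_zero fun k hk => ?_
    rw [Nat.choose_eq_zero_of_lt (by simpa using hk), Nat.cast_zero, zero_mul, zero_div]
  have hW : Summable (binomialWeight x y n) :=
    (summable_prod_of_nonneg (binomialWeight_nonneg hx hy0 n)).2
      ⟨fun k => (hinner k).summable, houter.summable.congr fun k => (hinner k).tsum_eq.symm⟩
  convert hW.hasSum using 1
  rw [hW.tsum_prod, ← houter.tsum_eq]
  exact tsum_congr fun k => (hinner k).tsum_eq.symm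

section ShiftedProducts

variable {a b : ℕ → ℝ}

lemma summable_mul_shift (ha0 : 0 ≤ a) (hb0 : 0 ≤ b) (ha : Summable a) (hb : Summable b) :
    Summable fun km : ℕ × ℕ => a km.2 * b (km.1 + km.2) :=
  (ha.mul_of_nonneg hb ha0 hb0).comp_injective (i := fun km : ℕ × ℕ => (km.2, km.1 + km.2))
    fun km km' h => by
      simp only [Prod.mk.injEq] at h
      ext <;> omega

lemma summable_convolution_prod {β : Type*} {g : ℕ × β → ℝ} (ha0 : 0 ≤ a) (hg0 : 0 ≤ g)
    (ha : Summable a) (hg : Summable g) :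
    Summable fun z : ℕ × ℕ × β => if z.2.1 ≤ z.1 then a (z.1 - z.2.1) * g z.2 else 0 := by
  set e : ℕ × ℕ × β → ℕ × ℕ × β := fun z => (z.1 + z.2.1, z.2)
  have he : Function.Injective e := by
    rintro ⟨j, k, x⟩ ⟨j', k', x'⟩ h
    obtain ⟨hjk, rfl, rfl⟩ := Prod.mk.injEq _ _ _ _ ▸ h
    exact Prod.ext (Nat.add_right_cancel hjk) rfl
  rw [← he.summable_iff]
  · exact (ha.mul_of_nonneg hg ha0 hg0).congr fun z => by simp [e]
  · rintro ⟨n, k, x⟩ hz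
    refine if_neg fun hk => hz ⟨(n - k, k, x), ?_⟩
    simp [e, Nat.sub_add_cancel hk]

end ShiftedProducts

def ouSummand (u v : ℕ → ℝ) (n : ℕ) (km : ℕ × ℕ) : ℝ :=
  Real.sqrt (Nat.choose n km.1 * Nat.choose (km.1 + km.2) km.2) *
    v (km.1 + km.2) * u (n - km.1) * u km.2

lemma ouSummand_sq {u v : ℕ → ℝ} {p q : ℝ} (hp : 0 < p) (hq : 0 < q) (n k m : ℕ) :
    ouSummand u v n (k, m) ^ 2 = binomialWeight (p / q) (p * q)⁻¹ n (k, m) * ((p ^ n)⁻¹ *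
      if k ≤ n then
        p ^ (n - k) * u (n - k) ^ 2 * (p ^ m * u m ^ 2 * (q ^ (k + m) * v (k + m) ^ 2))
      else 0) := by
  simp only [ouSummand, binomialWeight]
  split_ifs with hk
  · obtain ⟨j, rfl⟩ := Nat.exists_eq_add_of_le hk
    rw [Nat.add_sub_cancel_left, mul_pow, mul_pow, mul_pow, Real.sq_sqrt (by positivity)]
    have := hp.ne'
    have := hq.ne'
    rw [div_pow, inv_pow, mul_pow, pow_add, pow_add]
    field_simp
  · simp [Nat.choose_eq_zero_of_lt (not_le.1 hk)]

/-- one-dimensional Ornstein-Uhlenbeck operator estimate.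
Note `Nat.choose n k = 0` for `k > n`, so the double series over all pairs `(k,m)`
coincides with the sum over `0 ≤ k ≤ n`, `m ≥ 0`. -/
theorem stmt8 (u v : ℕ → ℝ) (p q r : ℝ) (hp : 0 < p) (hq : 0 < q) (hr : 0 < r)
    (hpqr : (1 / r - 1 / p) * (q - 1 / p) = 1) (hpq : 1 < p * q)
    (hu : Summable fun n => p ^ n * (u n) ^ 2)
    (hv : Summable fun n => q ^ n * (v n) ^ 2) :
    (∀ n, Summable fun km : ℕ × ℕ =>
      |Real.sqrt (Nat.choose n km.1 * Nat.choose (km.1 + km.2) km.2) *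
        v (km.1 + km.2) * u (n - km.1) * u km.2|) ∧
    Summable (fun n => r ^ n *
      (∑' km : ℕ × ℕ,
        Real.sqrt (Nat.choose n km.1 * Nat.choose (km.1 + km.2) km.2) *
          v (km.1 + km.2) * u (n - km.1) * u km.2) ^ 2) := by
  show (∀ n, Summable fun km => |ouSummand u v n km|) ∧
    Summable fun n => r ^ n * (∑' km, ouSummand u v n km) ^ 2
  have hweight : 1 + p / q / (1 - (p * q)⁻¹) = p / r := by
    have : p * q - 1 ≠ 0 := by linarith
    field_simp at hpqr ⊢
    linarith
  set y := (p * q)⁻¹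
  have hy : y < 1 := inv_lt_one_of_one_lt₀ hpq
  have hW n := hasSum_binomialWeight (div_pos hp hq).le (by positivity) hy n
  have hW0 n := binomialWeight_nonneg (div_pos hp hq).le (by positivity : 0 ≤ y) n
  set a : ℕ → ℝ := fun j => p ^ j * u j ^ 2
  set b : ℕ → ℝ := fun j => q ^ j * v j ^ 2
  have ha0 : 0 ≤ a := fun j => by positivity
  have hb0 : 0 ≤ b := fun j => by positivity
  set g : ℕ × ℕ → ℝ := fun km => a km.2 * b (km.1 + km.2)
  set T : ℕ × ℕ × ℕ → ℝ := fun z => if z.2.1 ≤ z.1 then a (z.1 - z.2.1) * g z.2 else 0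
  have hT : Summable T :=
    summable_convolution_prod ha0 (fun km => mul_nonneg (ha0 _) (hb0 _)) hu
      (summable_mul_shift ha0 hb0 hu hv)
  have hT0 : 0 ≤ T := fun z => ite_nonneg (mul_nonneg (ha0 _) (mul_nonneg (ha0 _) (hb0 _))) le_rfl
  have hTn0 n : 0 ≤ fun km => (p ^ n)⁻¹ * T (n, km) :=
    fun km => mul_nonneg (by positivity) (hT0 _)
  have hTn n : Summable fun km => (p ^ n)⁻¹ * T (n, km) := (hT.prod_factor n).mul_left _
  have hsq n (km : ℕ × ℕ) :
      ouSummand u v n km ^ 2 ≤ binomialWeight (p / q) y n km * ((p ^ n)⁻¹ * T (n, km)) :=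
    (ouSummand_sq hp hq n km.1 km.2).le
  refine ⟨fun n => summable_abs_of_sq_le_mul (hW0 n) (hTn0 n) (hW n).summable (hTn n) (hsq n),
    ?_⟩
  refine Summable.of_nonneg_of_le (fun n => by positivity) (fun n => ?_)
    (hT.prod.mul_left (1 - y)⁻¹)
  calc r ^ n * (∑' km, ouSummand u v n km) ^ 2
      ≤ r ^ n * ((1 - y)⁻¹ * (p / r) ^ n * ∑' km, (p ^ n)⁻¹ * T (n, km)) := by
        rw [← hweight, ← (hW n).tsum_eq]
        gcongr
        exact sq_tsum_le_tsum_mul_tsum_of_sq_le_mul (hW0 n) (hTn0 n) (hW n).summable (hTn n)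
          (hsq n)
    _ = (1 - y)⁻¹ * ∑' km, T (n, km) := by
        rw [tsum_mul_left, div_pow]
        field_simp
end
end

section
/- Let p, q, r be sequences of positive numbers with 1/p_k² + 1/q_k² = 1/r_k² for all k. Let U, X be Hilbert spaces, (u_α) a family in U with ∑_α p^{2α}‖u_α‖² < ∞ and (f_α) a family in X⊗U with ∑_α q^{2α}‖f_α‖² < ∞. Define g_γ = ∑_{α+β=γ} C(γ,α)^{1/2} (f_α, u_β)_U ∈ X (a finite sum, with the U-pairing applied to the U-component of f_α). Then ∑_γ r^{2γ}‖g_γ‖_X² ≤ (∑_α p^{2α}‖u_α‖²)(∑_α q^{2α}‖f_α‖²). -/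
open scoped BigOperators

noncomputable section

/-! With `x_k = r_k²/q_k²` and `y_k = r_k²/p_k²` one has `x_k + y_k = 1`, so by the binomial
theorem for multi-indices the weights `C(γ,α) x^α y^(γ-α)`, `α ≤ γ`, sum to `1`. Cauchy–Schwarz
against these weights bounds `r^(2γ) ‖g_γ‖²` by the convolution
`∑_{α ≤ γ} q^(2α) ‖f_α‖² p^(2(γ-α)) ‖u_(γ-α)‖²`, and the Cauchy product formula sums these
convolutions to the product of the two series. -/

open Finset

namespace Finset

theorem sum_finsupp_prod_s11 {ι α R : Type*} [Zero α] [CommSemiring R] (s : Finset ι)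
    (t : ι → Finset α) (g : ι → α → R) :
    ∑ f ∈ s.finsupp t, ∏ i ∈ s, g i (f i) = ∏ i ∈ s, ∑ a ∈ t i, g i a := by
  classical
  rw [prod_sum, Finset.finsupp, sum_map]
  refine sum_congr rfl fun f _ => ?_
  rw [← prod_attach]
  exact prod_congr rfl fun i _ => by simp [Finsupp.indicator_of_mem i.2]

theorem sum_Iic_eq_sum_antidiagonal {A M : Type*} [AddCommMonoid A] [PartialOrder A]
    [CanonicallyOrderedAdd A] [Sub A] [OrderedSub A] [AddLeftReflectLE A]
    [LocallyFiniteOrderBot A] [HasAntidiagonal A] [AddCommMonoid M] (F : A → A → M) (n : A) :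
    ∑ a ∈ Iic n, F a (n - a) = ∑ kl ∈ antidiagonal n, F kl.1 kl.2 := by
  refine sum_nbij' (fun a => (a, n - a)) Prod.fst (fun a ha => ?_) (fun kl hkl => ?_)
    (fun _ _ => rfl) (fun kl hkl => ?_) (fun _ _ => rfl)
  · rw [HasAntidiagonal.mem_antidiagonal, add_tsub_cancel_of_le (mem_Iic.1 ha)]
  · exact mem_Iic.2 (HasAntidiagonal.antidiagonal.fst_le hkl)
  · rw [← HasAntidiagonal.mem_antidiagonal.1 hkl, add_tsub_cancel_left]

end Finset

theorem Finsupp.Iic_eq_finsupp_s11 {ι α : Type*} [AddCommMonoid α] [PartialOrder α]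
    [CanonicallyOrderedAdd α] [OrderBot α] [LocallyFiniteOrder α] [DecidableEq ι] [DecidableEq α]
    (f : ι →₀ α) : Iic f = f.support.finsupp fun i => Iic (f i) := by
  simp only [Iic_eq_Icc, Finsupp.Icc_eq, bot_eq_zero, Finsupp.support_zero, empty_union]
  congr 1

lemma mpow_eq_prod_of_support_subset (x : ℕ → ℝ) {α : MultiIndex} {s : Finset ℕ}
    (h : α.support ⊆ s) : mpow x α = ∏ k ∈ s, x k ^ α k :=
  prod_subset h fun k _ hk => by rw [Finsupp.notMem_support_iff.1 hk, pow_zero]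

lemma mpow_add (x : ℕ → ℝ) (α β : MultiIndex) : mpow x (α + β) = mpow x α * mpow x β := by
  rw [mpow_eq_prod_of_support_subset x Finsupp.support_add,
    mpow_eq_prod_of_support_subset x (subset_union_left (s₂ := β.support)),
    mpow_eq_prod_of_support_subset x (subset_union_right (s₁ := α.support)),
    ← prod_mul_distrib]
  exact prod_congr rfl fun k _ => by rw [Finsupp.add_apply, pow_add]

lemma mpow_mul (x y : ℕ → ℝ) (α : MultiIndex) :
    mpow (fun k => x k * y k) α = mpow x α * mpow y α := by
  simp only [mpow, mul_pow, prod_mul_distrib]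

lemma mpow_nonneg {x : ℕ → ℝ} (hx : ∀ k, 0 ≤ x k) (α : MultiIndex) : 0 ≤ mpow x α :=
  prod_nonneg fun k _ => pow_nonneg (hx k) _

lemma mpow_one (α : MultiIndex) : mpow (fun _ => 1) α = 1 := by
  simp only [mpow, one_pow, prod_const_one]

lemma mchoose_eq_prod_of_le {α γ : MultiIndex} (h : α ≤ γ) :
    mchoose γ α = ∏ k ∈ γ.support, (γ k).choose (α k) := by
  rw [mchoose, union_eq_left.2 (Finsupp.support_mono h)]

theorem sum_Iic_mchoose_mul_mpow_mul_mpow (x y : ℕ → ℝ) (γ : MultiIndex) :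
    ∑ α ∈ Iic γ, (mchoose γ α : ℝ) * mpow x α * mpow y (γ - α) = mpow (fun k => x k + y k) γ := by
  have summand : ∀ α ∈ Iic γ, (mchoose γ α : ℝ) * mpow x α * mpow y (γ - α) =
      ∏ k ∈ γ.support, ((γ k).choose (α k) * x k ^ α k * y k ^ (γ k - α k)) := by
    intro α hα
    have hle := mem_Iic.1 hα
    rw [mchoose_eq_prod_of_le hle, Nat.cast_prod,
      mpow_eq_prod_of_support_subset x (Finsupp.support_mono hle),
      mpow_eq_prod_of_support_subset y Finsupp.support_tsub, ← prod_mul_distrib,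
      ← prod_mul_distrib]
    simp only [Finsupp.tsub_apply]
  rw [sum_congr rfl summand, Finsupp.Iic_eq_finsupp_s11,
    sum_finsupp_prod_s11 _ _ fun k i => ((γ k).choose i : ℝ) * x k ^ i * y k ^ (γ k - i), mpow]
  refine prod_congr rfl fun k _ => ?_
  rw [← Nat.range_succ_eq_Iic, add_pow]
  exact sum_congr rfl fun i _ => by ring

theorem hasSum_sum_Iic_mul_tsub {ι : Type*} [AddCommMonoid ι] [PartialOrder ι]
    [CanonicallyOrderedAdd ι] [Sub ι] [OrderedSub ι] [AddLeftReflectLE ι]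
    [LocallyFiniteOrderBot ι] [HasAntidiagonal ι] {A B : ι → ℝ} (hA : 0 ≤ A) (hB : 0 ≤ B)
    (hAs : Summable A) (hBs : Summable B) :
    HasSum (fun γ => ∑ α ∈ Iic γ, A α * B (γ - α)) ((∑' α, A α) * ∑' β, B β) := by
  have hAB := hAs.mul_of_nonneg hBs hA hB
  simp_rw [sum_Iic_eq_sum_antidiagonal fun a b => A a * B b,
    hAs.tsum_mul_tsum_eq_tsum_sum_antidiagonal hBs hAB]
  exact (summable_sum_mul_antidiagonal_of_summable_mul hAB).hasSum

section Weights

variable {p q r : ℕ → ℝ}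

lemma sq_add_sq_div_eq_one (hp : ∀ k, p k ≠ 0) (hq : ∀ k, q k ≠ 0)
    (hpqr : ∀ k, 1 / p k ^ 2 + 1 / q k ^ 2 = 1 / r k ^ 2) (k : ℕ) :
    r k ^ 2 / q k ^ 2 + r k ^ 2 / p k ^ 2 = 1 := by
  have hpos : 0 < 1 / p k ^ 2 + 1 / q k ^ 2 := by
    have := hp k
    have := hq k
    positivity
  rw [hpqr k] at hpos
  calc r k ^ 2 / q k ^ 2 + r k ^ 2 / p k ^ 2 = r k ^ 2 * (1 / p k ^ 2 + 1 / q k ^ 2) := by ring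
    _ = 1 := by rw [hpqr k, mul_one_div_cancel (one_div_pos.1 hpos).ne']

lemma sum_Iic_mchoose_mul_mpow_div_sq_eq_one (hp : ∀ k, p k ≠ 0) (hq : ∀ k, q k ≠ 0)
    (hpqr : ∀ k, 1 / p k ^ 2 + 1 / q k ^ 2 = 1 / r k ^ 2) (γ : MultiIndex) :
    ∑ α ∈ Iic γ, (mchoose γ α : ℝ) * mpow (fun k => r k ^ 2 / q k ^ 2) α *
      mpow (fun k => r k ^ 2 / p k ^ 2) (γ - α) = 1 := by
  simp only [sum_Iic_mchoose_mul_mpow_mul_mpow, sq_add_sq_div_eq_one hp hq hpqr, mpow_one]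

lemma mpow_div_sq_mul_mpow_sq (hq : ∀ k, q k ≠ 0) (α : MultiIndex) :
    mpow (fun k => r k ^ 2 / q k ^ 2) α * mpow (fun k => q k ^ 2) α =
      mpow (fun k => r k ^ 2) α := by
  simp only [← mpow_mul, div_mul_cancel₀ _ (pow_ne_zero 2 (hq _))]

theorem mpow_sq_mul_sq_sum_Iic_le (hp : ∀ k, p k ≠ 0) (hq : ∀ k, q k ≠ 0)
    (hpqr : ∀ k, 1 / p k ^ 2 + 1 / q k ^ 2 = 1 / r k ^ 2) (a b : MultiIndex → ℝ)
    (γ : MultiIndex) :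
    mpow (fun k => r k ^ 2) γ * (∑ α ∈ Iic γ, √(mchoose γ α) * (a α * b (γ - α))) ^ 2 ≤
      ∑ α ∈ Iic γ, (mpow (fun k => q k ^ 2) α * a α ^ 2) *
        (mpow (fun k => p k ^ 2) (γ - α) * b (γ - α) ^ 2) := by
  have hr : mpow (fun k => r k ^ 2) γ = mpow r γ ^ 2 := by simp only [sq, mpow_mul]
  have hterm : ∀ α ∈ Iic γ, (mpow r γ * (√(mchoose γ α) * (a α * b (γ - α)))) ^ 2 =
      ((mchoose γ α : ℝ) * mpow (fun k => r k ^ 2 / q k ^ 2) α *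
        mpow (fun k => r k ^ 2 / p k ^ 2) (γ - α)) *
      ((mpow (fun k => q k ^ 2) α * a α ^ 2) *
        (mpow (fun k => p k ^ 2) (γ - α) * b (γ - α) ^ 2)) := by
    intro α hα
    have hsplit : mpow (fun k => r k ^ 2) γ =
        mpow (fun k => r k ^ 2) α * mpow (fun k => r k ^ 2) (γ - α) := by
      rw [← mpow_add, add_tsub_cancel_of_le (mem_Iic.1 hα)]
    rw [mul_pow, ← hr, hsplit, ← mpow_div_sq_mul_mpow_sq hq α,
      ← mpow_div_sq_mul_mpow_sq hp (γ - α), mul_pow, mul_pow, Real.sq_sqrt (Nat.cast_nonneg _)]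
    ring
  calc mpow (fun k => r k ^ 2) γ * (∑ α ∈ Iic γ, √(mchoose γ α) * (a α * b (γ - α))) ^ 2
      = (∑ α ∈ Iic γ, mpow r γ * (√(mchoose γ α) * (a α * b (γ - α)))) ^ 2 := by
        rw [hr, ← mul_pow, mul_sum]
    _ ≤ (∑ α ∈ Iic γ, (mchoose γ α : ℝ) * mpow (fun k => r k ^ 2 / q k ^ 2) α *
          mpow (fun k => r k ^ 2 / p k ^ 2) (γ - α)) *
        ∑ α ∈ Iic γ, (mpow (fun k => q k ^ 2) α * a α ^ 2) *
          (mpow (fun k => p k ^ 2) (γ - α) * b (γ - α) ^ 2) :=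
        sum_sq_le_sum_mul_sum_of_sq_le_mul _
          (fun α _ => mul_nonneg (mul_nonneg (Nat.cast_nonneg _)
            (mpow_nonneg (fun _ => by positivity) _)) (mpow_nonneg (fun _ => by positivity) _))
          (fun α _ => mul_nonneg (mul_nonneg (mpow_nonneg (fun _ => sq_nonneg _) _) (sq_nonneg _))
            (mul_nonneg (mpow_nonneg (fun _ => sq_nonneg _) _) (sq_nonneg _)))
          fun α hα => (hterm α hα).le
    _ = _ := by rw [sum_Iic_mchoose_mul_mpow_div_sq_eq_one hp hq hpqr, one_mul]

end Weights

theorem norm_sum_Iic_sqrt_mchoose_smul_le {U W X : Type*} [SeminormedAddCommGroup U]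
    [SeminormedAddCommGroup W] [SeminormedAddCommGroup X] [NormedSpace ℝ X]
    (P : W → U → X) (hP : ∀ w y, ‖P w y‖ ≤ ‖w‖ * ‖y‖) (u : MultiIndex → U)
    (f : MultiIndex → W) (γ : MultiIndex) :
    ‖∑ α ∈ Iic γ, √(mchoose γ α) • P (f α) (u (γ - α))‖ ≤
      ∑ α ∈ Iic γ, √(mchoose γ α) * (‖f α‖ * ‖u (γ - α)‖) :=
  (norm_sum_le _ _).trans <| sum_le_sum fun α _ => by
    rw [norm_smul, Real.norm_of_nonneg (Real.sqrt_nonneg _)]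
    exact mul_le_mul_of_nonneg_left (hP _ _) (Real.sqrt_nonneg _)

/-- `W` plays the role of `X ⊗ U` and `P` that of the partial inner product `(·,·)_U`. -/
theorem stmt11_general {U X W : Type*}
    [NormedAddCommGroup U] [InnerProductSpace ℝ U]
    [NormedAddCommGroup X] [InnerProductSpace ℝ X]
    [NormedAddCommGroup W] [InnerProductSpace ℝ W]
    (P : W →ₗ[ℝ] U →ₗ[ℝ] X) (hP : ∀ (w : W) (y : U), ‖P w y‖ ≤ ‖w‖ * ‖y‖)
    (p q r : ℕ → ℝ) (hp : ∀ k, 0 < p k) (hq : ∀ k, 0 < q k)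
    (hpqr : ∀ k, 1 / (p k) ^ 2 + 1 / (q k) ^ 2 = 1 / (r k) ^ 2)
    (u : MultiIndex → U) (f : MultiIndex → W)
    (hu : Summable fun α => mpow (fun k => (p k) ^ 2) α * ‖u α‖ ^ 2)
    (hf : Summable fun α => mpow (fun k => (q k) ^ 2) α * ‖f α‖ ^ 2) :
    Summable (fun γ : MultiIndex => mpow (fun k => (r k) ^ 2) γ *
      ‖∑ α ∈ Finset.Iic γ, Real.sqrt (mchoose γ α) • P (f α) (u (γ - α))‖ ^ 2) ∧
    ∑' γ : MultiIndex, mpow (fun k => (r k) ^ 2) γ *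
        ‖∑ α ∈ Finset.Iic γ, Real.sqrt (mchoose γ α) • P (f α) (u (γ - α))‖ ^ 2
      ≤ (∑' α : MultiIndex, mpow (fun k => (p k) ^ 2) α * ‖u α‖ ^ 2) *
        (∑' α : MultiIndex, mpow (fun k => (q k) ^ 2) α * ‖f α‖ ^ 2) := by
  have hconv := hasSum_sum_Iic_mul_tsub (hAs := hf) (hBs := hu)
    (fun α => mul_nonneg (mpow_nonneg (fun k => sq_nonneg (q k)) α) (sq_nonneg ‖f α‖))
    (fun α => mul_nonneg (mpow_nonneg (fun k => sq_nonneg (p k)) α) (sq_nonneg ‖u α‖))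
  have hle : ∀ γ, mpow (fun k => r k ^ 2) γ *
      ‖∑ α ∈ Iic γ, √(mchoose γ α) • P (f α) (u (γ - α))‖ ^ 2 ≤
      ∑ α ∈ Iic γ, (mpow (fun k => q k ^ 2) α * ‖f α‖ ^ 2) *
        (mpow (fun k => p k ^ 2) (γ - α) * ‖u (γ - α)‖ ^ 2) := fun γ =>
    (mul_le_mul_of_nonneg_left (pow_le_pow_left₀ (norm_nonneg _)
      (norm_sum_Iic_sqrt_mchoose_smul_le (fun w y => P w y) hP u f γ) 2)
      (mpow_nonneg (fun k => sq_nonneg (r k)) γ)).trans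
    (mpow_sq_mul_sq_sum_Iic_le (fun k => (hp k).ne') (fun k => (hq k).ne') hpqr
      (fun α => ‖f α‖) (fun β => ‖u β‖) γ)
  have hsum := hconv.summable.of_nonneg_of_le
    (fun γ => mul_nonneg (mpow_nonneg (fun k => sq_nonneg (r k)) γ) (sq_nonneg _)) hle
  refine ⟨hsum, ?_⟩
  rw [mul_comm, ← hconv.tsum_eq]
  exact hsum.tsum_le_tsum hle hconv.summable

/-- Theorem 4.3(a): Skorokhod integral bound.
`W` plays the role of `X ⊗ U` and `P` of the partial inner product
`(·,·)_U : (X⊗U) × U → X`, which is norm-contractive. -/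
theorem stmt11 {U X W : Type*}
    [NormedAddCommGroup U] [InnerProductSpace ℝ U]
    [NormedAddCommGroup X] [InnerProductSpace ℝ X]
    [NormedAddCommGroup W] [InnerProductSpace ℝ W]
    (P : W →ₗ[ℝ] U →ₗ[ℝ] X) (hP : ∀ (w : W) (y : U), ‖P w y‖ ≤ ‖w‖ * ‖y‖)
    (p q r : ℕ → ℝ) (hp : ∀ k, 0 < p k) (hq : ∀ k, 0 < q k) (hr : ∀ k, 0 < r k)
    (hpqr : ∀ k, 1 / (p k) ^ 2 + 1 / (q k) ^ 2 = 1 / (r k) ^ 2)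
    (u : MultiIndex → U) (f : MultiIndex → W)
    (hu : Summable fun α => mpow (fun k => (p k) ^ 2) α * ‖u α‖ ^ 2)
    (hf : Summable fun α => mpow (fun k => (q k) ^ 2) α * ‖f α‖ ^ 2) :
    Summable (fun γ : MultiIndex => mpow (fun k => (r k) ^ 2) γ *
      ‖∑ α ∈ Finset.Iic γ, Real.sqrt (mchoose γ α) • P (f α) (u (γ - α))‖ ^ 2) ∧
    ∑' γ : MultiIndex, mpow (fun k => (r k) ^ 2) γ *
        ‖∑ α ∈ Finset.Iic γ, Real.sqrt (mchoose γ α) • P (f α) (u (γ - α))‖ ^ 2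
      ≤ (∑' α : MultiIndex, mpow (fun k => (p k) ^ 2) α * ‖u α‖ ^ 2) *
        (∑' α : MultiIndex, mpow (fun k => (q k) ^ 2) α * ‖f α‖ ^ 2) :=
  stmt11_general P hP p q r hp hq hpqr u f hu hf
end
end

section
/- Let n ≥ 1, let q_1,...,q_n be positive numbers, r = min(q_1,...,q_n), and let ρ > 0, ℓ ≥ ρ. Then for every family (f_α) in a Hilbert space X indexed by multi-indices supported in {1,...,n}, ∑_α q^{2α}‖f_α‖² < ∞ implies ∑_α (α!)^{−ρ}(2ℕ)^{−2ℓα}‖f_α‖² < ∞; i.e., L_{2,q}(X) ⊂ (S)_{−ρ,−ℓ}(X) when the index space is finite-dimensional. -/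
/-! Factorials beat every exponential: for `a > 0` and `ρ > 0`, `(m!)^(-ρ) ≤ C a^m`, since
`(a^(-1/ρ))^m / m! ≤ exp (a^(-1/ρ))`. Multiplying these bounds over the finitely many coordinates,
with `a_k = q_k² (2(k+1))^(2ℓ)`, dominates the weight `(α!)^(-ρ) (2ℕ)^(-2ℓα)` by a constant
times `q^(2α)`, and the comparison test gives summability. -/

open scoped BigOperators

noncomputable section

open Real Finset
open scoped Nat

lemma pow_le_exp_rpow_mul_factorial_rpow {x ρ : ℝ} (hx : 0 ≤ x) (hρ : 0 < ρ) (m : ℕ) :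
    x ^ m ≤ exp (x ^ ρ⁻¹) ^ ρ * (m ! : ℝ) ^ ρ := by
  set y := x ^ ρ⁻¹
  have hy : 0 ≤ y := rpow_nonneg hx _
  have hxy : x ^ m = (y ^ m) ^ ρ := by
    rw [← rpow_natCast, ← rpow_natCast, ← rpow_mul hx, ← rpow_mul hx]
    field_simp
  have hym : y ^ m ≤ exp y * m ! := by
    have := pow_div_factorial_le_exp _ hy m
    rwa [div_le_iff₀ (by positivity)] at this
  rw [hxy, ← mul_rpow (exp_pos y).le (by positivity)]
  exact rpow_le_rpow (by positivity) hym hρ.le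

lemma exists_factorial_rpow_neg_le_mul_pow {a ρ : ℝ} (ha : 0 < a) (hρ : 0 < ρ) :
    ∃ C, 0 ≤ C ∧ ∀ m : ℕ, (m ! : ℝ) ^ (-ρ) ≤ C * a ^ m := by
  refine ⟨exp (a⁻¹ ^ ρ⁻¹) ^ ρ, by positivity, fun m => ?_⟩
  have hbound := pow_le_exp_rpow_mul_factorial_rpow (inv_nonneg.mpr ha.le) hρ m
  rw [inv_pow, inv_le_iff_one_le_mul₀ (by positivity)] at hbound
  rw [rpow_neg (by positivity), inv_le_iff_one_le_mul₀ (by positivity)]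
  linarith

lemma exists_prod_factorial_rpow_neg_le_mul_prod_pow {ι : Type*} [Fintype ι] {a : ι → ℝ}
    (ha : ∀ k, 0 < a k) {ρ : ℝ} (hρ : 0 < ρ) :
    ∃ C, 0 ≤ C ∧ ∀ α : ι → ℕ, (∏ k, ((α k)! : ℝ)) ^ (-ρ) ≤ C * ∏ k, a k ^ α k := by
  choose C hC0 hC using fun k => exists_factorial_rpow_neg_le_mul_pow (ha k) hρ
  refine ⟨∏ k, C k, prod_nonneg fun k _ => hC0 k, fun α => ?_⟩
  rw [← Real.finsetProd_rpow _ _ (fun k _ => by positivity), ← prod_mul_distrib]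
  exact prod_le_prod (fun k _ => by positivity) fun k _ => hC k (α k)

lemma summable_prod_factorial_rpow_neg_mul_of_summable {ι : Type*} [Fintype ι] {a b : ι → ℝ}
    (ha : ∀ k, 0 < a k) (hb : ∀ k, 0 < b k) {ρ : ℝ} (hρ : 0 < ρ) {g : (ι → ℕ) → ℝ}
    (hg0 : ∀ α, 0 ≤ g α) (hg : Summable fun α : ι → ℕ => (∏ k, a k ^ α k) * g α) :
    Summable fun α : ι → ℕ => (∏ k, ((α k)! : ℝ)) ^ (-ρ) * (∏ k, b k ^ α k) * g α := by
  obtain ⟨C, hC0, hC⟩ :=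
    exists_prod_factorial_rpow_neg_le_mul_prod_pow (fun k => div_pos (ha k) (hb k)) hρ
  have hfact_pos : ∀ α : ι → ℕ, 0 < ∏ k, ((α k)! : ℝ) := fun α =>
    prod_pos fun k _ => by positivity
  refine (hg.mul_left C).of_nonneg_of_le
    (fun α => mul_nonneg (mul_nonneg (rpow_nonneg (hfact_pos α).le _)
      (prod_nonneg fun k _ => (pow_pos (hb k) _).le)) (hg0 α)) fun α => ?_
  have hweight : (∏ k, ((α k)! : ℝ)) ^ (-ρ) * ∏ k, b k ^ α k ≤ C * ∏ k, a k ^ α k := by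
    calc (∏ k, ((α k)! : ℝ)) ^ (-ρ) * ∏ k, b k ^ α k
        ≤ C * (∏ k, (a k / b k) ^ α k) * ∏ k, b k ^ α k :=
          mul_le_mul_of_nonneg_right (hC α) (prod_nonneg fun k _ => (pow_pos (hb k) _).le)
      _ = C * ∏ k, a k ^ α k := by
          rw [mul_assoc, ← prod_mul_distrib]
          congr 1
          refine prod_congr rfl fun k _ => ?_
          rw [← mul_pow, div_mul_cancel₀ _ (hb k).ne']
  calc _ ≤ C * (∏ k, a k ^ α k) * g α := mul_le_mul_of_nonneg_right hweight (hg0 α)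
    _ = C * ((∏ k, a k ^ α k) * g α) := mul_assoc _ _ _

theorem stmt16_general {X : Type*} [NormedAddCommGroup X] (n : ℕ) (q : Fin (n + 1) → ℝ)
    (hq : ∀ k, 0 < q k) (ρ ℓ : ℝ)
    (hρ : 0 < ρ)
    (f : (Fin (n + 1) → ℕ) → X)
    (hf : Summable fun α : Fin (n + 1) → ℕ => (∏ k, q k ^ (2 * α k)) * ‖f α‖ ^ 2) :
    Summable fun α : Fin (n + 1) → ℕ =>
      ((∏ k, ((α k).factorial : ℝ)) ^ (-ρ)) *
        (∏ k : Fin (n + 1), ((2 * ((k : ℕ) + 1) : ℝ)) ^ (-(2 * ℓ) * (α k : ℝ))) * ‖f α‖ ^ 2 := by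
  have hsq : ∀ k, 0 < q k ^ 2 := fun k => pow_pos (hq k) 2
  have hb : ∀ k : Fin (n + 1), 0 < (2 * ((k : ℕ) + 1) : ℝ) ^ (-(2 * ℓ)) :=
    fun k => rpow_pos_of_pos (by positivity) _
  have hf' : Summable fun α : Fin (n + 1) → ℕ => (∏ k, (q k ^ 2) ^ α k) * ‖f α‖ ^ 2 := by
    simpa only [pow_mul] using hf
  refine (summable_prod_factorial_rpow_neg_mul_of_summable hsq hb hρ
    (fun α => sq_nonneg ‖f α‖) hf').congr fun α => ?_
  congr 2
  refine prod_congr rfl fun k _ => ?_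
  rw [rpow_mul (by positivity), rpow_natCast]

/-- in the finite-dimensional case, `L_{2,q}(X) ⊂ (S)_{-ρ,-ℓ}(X)`
for every `ρ > 0`, `ℓ ≥ ρ`, and every (finite) sequence `q` of positive weights,
with `r = min(q_1,…,q_n)`. -/
theorem stmt16 {X : Type*} [NormedAddCommGroup X] (n : ℕ) (q : Fin (n + 1) → ℝ)
    (hq : ∀ k, 0 < q k) (r ρ ℓ : ℝ)
    (hrdef : r = Finset.univ.inf' Finset.univ_nonempty q)
    (hρ : 0 < ρ) (hℓ : ρ ≤ ℓ)
    (f : (Fin (n + 1) → ℕ) → X)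
    (hf : Summable fun α : Fin (n + 1) → ℕ => (∏ k, q k ^ (2 * α k)) * ‖f α‖ ^ 2) :
    Summable fun α : Fin (n + 1) → ℕ =>
      ((∏ k, ((α k).factorial : ℝ)) ^ (-ρ)) *
        (∏ k : Fin (n + 1), ((2 * ((k : ℕ) + 1) : ℝ)) ^ (-(2 * ℓ) * (α k : ℝ))) * ‖f α‖ ^ 2 :=
  stmt16_general n q hq ρ ℓ hρ f hf
end
end
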